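/- arXiv:1911.07059 — 8 statements merged into one kernel-verified Lean document; each statement's English description precedes it below -/
import Mathlib

section
/- For every t ∈ ℂ with t ∉ -ℕ₀, the semi-infinite Jacobi matrix J_t with entries (J_t)_{n,n} = 2n(n+t), (J_t)_{n,n+1} = (J_t)_{n+1,n} = (n+1)(n+t), all other entries zero, commutes entrywise with the Hankel matrix H̃_t whose (m,n) entry is (-1)^{m+n}/(m+n+t). -/
open scoped BigOperators

/-- Entry of `J * H` where `J` is the tridiagonal matrix with diagonal `β` and
off-diagonal `α` (`J_{k,k+1} = J_{k+1,k} = α k`); the sum is finite since `J` is banded. -/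
noncomputable def jacobiMulC (α β : ℕ → ℂ) (H : ℕ → ℕ → ℂ) (m n : ℕ) : ℂ :=
  (if m = 0 then 0 else α (m - 1) * H (m - 1) n) + β m * H m n + α m * H (m + 1) n

/-- Entry of `H * J`. -/
noncomputable def mulJacobiC (α β : ℕ → ℂ) (H : ℕ → ℕ → ℂ) (m n : ℕ) : ℂ :=
  (if n = 0 then 0 else H m (n - 1) * α (n - 1)) + H m n * β n + H m (n + 1) * α n

/-! With `s = m + n` and `u = s + t`, each entry of `J_t H̃_t` is `(-1)^s` times a rational
function of `m`, `n`, `u`: writing `m + t = u - n` and `m - 1 + t = u - 1 - n` splits each of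
its three terms into a polynomial part in `m` and a part over `u - 1`, `u` or `u + 1`, and the
polynomial parts add up to `-1`, leaving an expression symmetric in `m` and `n`. Hence `J_t H̃_t`
is symmetric, and since `H̃_t` and `J_t` are, `H̃_t J_t = (J_t H̃_t)ᵀ = J_t H̃_t`. -/

theorem mulJacobiC_eq_jacobiMulC_transpose (α β : ℕ → ℂ) (H : ℕ → ℕ → ℂ) (m n : ℕ) :
    mulJacobiC α β H m n = jacobiMulC α β (fun i j => H j i) n m := by
  simp only [mulJacobiC, jacobiMulC, mul_comm]

section

variable (t : ℂ)

def jacobiOffDiag (k : ℕ) : ℂ := ((k : ℂ) + 1) * ((k : ℂ) + t)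

def jacobiDiag (k : ℕ) : ℂ := 2 * (k : ℂ) * ((k : ℂ) + t)

noncomputable def signedHilbert (i j : ℕ) : ℂ := (-1 : ℂ) ^ (i + j) / ((i : ℂ) + (j : ℂ) + t)

theorem signedHilbert_transpose : (fun i j => signedHilbert t j i) = signedHilbert t := by
  ext i j
  simp only [signedHilbert, add_comm]

/-- At `m = 0` the term over `u - 1 = n + t - 1` vanishes also when its denominator does,
matching the `if m = 0` branch of `jacobiMulC`. -/
noncomputable def jacobiHankelKernel (m n : ℕ) : ℂ :=
  -1 + m * n / (m + n + t - 1) - 2 * m * n / (m + n + t) + (m + 1) * (n + 1) / (m + n + t + 1)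

theorem jacobiHankelKernel_comm (m n : ℕ) :
    jacobiHankelKernel t m n = jacobiHankelKernel t n m := by
  unfold jacobiHankelKernel
  ring

variable {t}

theorem jacobiOffDiag_mul_signedHilbert_pred (ht : ∀ k : ℕ, (k : ℂ) + t ≠ 0) (m n : ℕ) :
    (if m = 0 then 0 else jacobiOffDiag t (m - 1) * signedHilbert t (m - 1) n) =
      (-1) ^ (m + n) * (m * n / (m + n + t - 1) - m) := by
  rcases m with _ | k
  · simp
  · have hu : (k : ℂ) + n + t ≠ 0 := by exact_mod_cast ht (k + n)
    simp only [Nat.add_one_ne_zero, if_false, Nat.add_sub_cancel, jacobiOffDiag, signedHilbert]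
    push_cast
    rw [show (k : ℂ) + 1 + n + t - 1 = k + n + t by ring]
    field_simp
    ring

theorem jacobiDiag_mul_signedHilbert (ht : ∀ k : ℕ, (k : ℂ) + t ≠ 0) (m n : ℕ) :
    jacobiDiag t m * signedHilbert t m n = (-1) ^ (m + n) * (2 * m - 2 * m * n / (m + n + t)) := by
  have hu : (m : ℂ) + n + t ≠ 0 := by exact_mod_cast ht (m + n)
  simp only [jacobiDiag, signedHilbert]
  field_simp
  ring

theorem jacobiOffDiag_mul_signedHilbert_succ (ht : ∀ k : ℕ, (k : ℂ) + t ≠ 0) (m n : ℕ) :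
    jacobiOffDiag t m * signedHilbert t (m + 1) n =
      (-1) ^ (m + n) * ((m + 1) * (n + 1) / (m + n + t + 1) - (m + 1)) := by
  have hu : (m : ℂ) + n + t + 1 ≠ 0 := by
    convert ht (m + n + 1) using 1
    push_cast
    ring
  simp only [jacobiOffDiag, signedHilbert]
  push_cast
  rw [show (m : ℂ) + 1 + n + t = m + n + t + 1 by ring]
  field_simp
  ring

theorem jacobiMulC_signedHilbert (ht : ∀ k : ℕ, (k : ℂ) + t ≠ 0) (m n : ℕ) :
    jacobiMulC (jacobiOffDiag t) (jacobiDiag t) (signedHilbert t) m n =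
      (-1) ^ (m + n) * jacobiHankelKernel t m n := by
  rw [jacobiMulC, jacobiOffDiag_mul_signedHilbert_pred ht, jacobiDiag_mul_signedHilbert ht,
    jacobiOffDiag_mul_signedHilbert_succ ht, jacobiHankelKernel]
  ring

end

/-- for `t ∉ -ℕ₀`, the Jacobi matrix `J_t` with `(J_t)_{n,n} = 2n(n+t)`,
`(J_t)_{n,n+1} = (J_t)_{n+1,n} = (n+1)(n+t)` commutes entrywise with the Hankel matrix
`H̃_t` with `(m,n)` entry `(-1)^{m+n}/(m+n+t)`. -/
theorem stmt1 (t : ℂ) (ht : ∀ k : ℕ, t ≠ -(k : ℂ)) :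
    ∀ m n : ℕ,
      jacobiMulC (fun k => ((k : ℂ) + 1) * ((k : ℂ) + t))
        (fun k => 2 * (k : ℂ) * ((k : ℂ) + t))
        (fun i j => (-1 : ℂ) ^ (i + j) / ((i : ℂ) + (j : ℂ) + t)) m n =
      mulJacobiC (fun k => ((k : ℂ) + 1) * ((k : ℂ) + t))
        (fun k => 2 * (k : ℂ) * ((k : ℂ) + t))
        (fun i j => (-1 : ℂ) ^ (i + j) / ((i : ℂ) + (j : ℂ) + t)) m n := by
  have ht' : ∀ k : ℕ, (k : ℂ) + t ≠ 0 := fun k h => ht k (eq_neg_of_add_eq_zero_right h)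
  intro m n
  change jacobiMulC (jacobiOffDiag t) (jacobiDiag t) (signedHilbert t) m n =
    mulJacobiC (jacobiOffDiag t) (jacobiDiag t) (signedHilbert t) m n
  rw [mulJacobiC_eq_jacobiMulC_transpose, signedHilbert_transpose, jacobiMulC_signedHilbert ht',
    jacobiMulC_signedHilbert ht', jacobiHankelKernel_comm, add_comm m]
end

section
/- Let (α_n)_{n≥0} be a sequence of positive reals such that α_n² is a polynomial in n of degree 4, and suppose there is a polynomial φ of degree 2 in n with leading coefficient 2 such that α_n + α_{n-1} = φ(n) for all n ≥ 1. Then α_n is a polynomial in n of degree 2 (with leading coefficient 1): α_n = n² + Bn + A for some constants A, B. -/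
/-! Write `φ(x) = s(x) + s(x - 1)` with `s` monic quadratic; then `α_n - s(n)` changes sign
at each step, so `α_n = s(n) + (-1)ⁿ c`. Squaring gives `α_n² = s(n)² + c² + (-1)ⁿ 2c s(n)`,
and a polynomial in `n` agrees with this on both the even and the odd integers only if
`2c s = 0`, i.e. `c = 0`. -/

open Polynomial

theorem eq_add_neg_one_pow_mul_of_forall_add_eq {R : Type*} [CommRing R] {a b : ℕ → R}
    (h : ∀ n, a (n + 1) + a n = b (n + 1) + b n) (n : ℕ) :
    a n = b n + (-1) ^ n * (a 0 - b 0) := by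
  induction n with
  | zero => ring
  | succ n ih => linear_combination h n - ih

namespace Polynomial

variable {K : Type*} [Field K] [CharZero K]

theorem eq_of_forall_eval_two_mul_add_eq {p q : K[X]} (r : ℕ)
    (h : ∀ k : ℕ, p.eval ((2 * k + r : ℕ) : K) = q.eval ((2 * k + r : ℕ) : K)) : p = q := by
  refine eq_of_infinite_eval_eq p q (Set.infinite_of_injective_forall_mem
    (f := fun k : ℕ => ((2 * k + r : ℕ) : K)) (fun k l hkl => ?_) h)
  have := Nat.cast_injective hkl
  omega

theorem eq_zero_of_forall_eval_eq_add_neg_one_pow_mul {q f g : K[X]}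
    (h : ∀ n : ℕ, q.eval (n : K) = f.eval (n : K) + (-1) ^ n * g.eval (n : K)) : g = 0 := by
  have heven : q = f + g := eq_of_forall_eval_two_mul_add_eq 0 fun k => by
    rw [h]; simp [pow_mul]
  have hodd : q = f - g := eq_of_forall_eval_two_mul_add_eq 1 fun k => by
    rw [h]; simp [pow_succ, pow_mul, sub_eq_add_neg]
  have : (2 : K[X]) * g = 0 := by linear_combination hodd - heven
  simpa using this

theorem eq_zero_of_forall_sq_eval_add_neg_one_pow_mul_eq_eval {s p : K[X]} (hs : s ≠ 0) (c : K)
    (h : ∀ n : ℕ, (s.eval (n : K) + (-1) ^ n * c) ^ 2 = p.eval (n : K)) : c = 0 := by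
  have hsq : C (2 * c) * s = 0 :=
    eq_zero_of_forall_eval_eq_add_neg_one_pow_mul (q := p) (f := s ^ 2 + C (c ^ 2)) fun n => by
      have hsign : ((-1 : K) ^ n) ^ 2 = 1 := by rw [← pow_mul, pow_mul']; simp
      simp only [← h, eval_add, eval_mul, eval_pow, eval_C]
      linear_combination c ^ 2 * hsign
  simpa [hs] using hsq

theorem exists_eval_eq_add_eval_sub_one {φ : K[X]} (hdeg : φ.natDegree = 2)
    (hlead : φ.leadingCoeff = 2) :
    ∃ B A : K, ∀ x : K, φ.eval x = (x ^ 2 + B * x + A) + ((x - 1) ^ 2 + B * (x - 1) + A) := by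
  refine ⟨(φ.coeff 1 + 2) / 2, (φ.coeff 0 - 1) / 2 + (φ.coeff 1 + 2) / 4, fun x => ?_⟩
  have h2 : φ.coeff 2 = 2 := by rw [← hdeg]; exact hlead
  rw [eval_eq_sum_range, hdeg]
  simp only [Finset.sum_range_succ, Finset.sum_range_zero, h2]
  ring

end Polynomial

theorem stmt6_general (α : ℕ → ℝ)
    (p : Polynomial ℝ)
    (hp : ∀ n : ℕ, (α n) ^ 2 = p.eval (n : ℝ))
    (φ : Polynomial ℝ) (hφdeg : φ.degree = 2) (hφlead : φ.leadingCoeff = 2)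
    (hrec : ∀ n : ℕ, 1 ≤ n → α n + α (n - 1) = φ.eval (n : ℝ)) :
    ∃ A B : ℝ, ∀ n : ℕ, α n = (n : ℝ) ^ 2 + B * (n : ℝ) + A := by
  obtain ⟨B, A, hφ⟩ :=
    exists_eval_eq_add_eval_sub_one (natDegree_eq_of_degree_eq_some hφdeg) hφlead
  set s : ℝ[X] := C 1 * X ^ 2 + C B * X + C A
  have hs : ∀ x : ℝ, s.eval x = x ^ 2 + B * x + A := fun x => by simp [s]
  have hα : ∀ n : ℕ, α n = s.eval (n : ℝ) + (-1) ^ n * (α 0 - s.eval 0) := by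
    have hsum : ∀ n : ℕ, α (n + 1) + α n = s.eval ((n + 1 : ℕ) : ℝ) + s.eval (n : ℝ) :=
      fun n => by simpa [hs, hφ] using hrec (n + 1) (Nat.le_add_left 1 n)
    simpa using eq_add_neg_one_pow_mul_of_forall_add_eq (b := fun n : ℕ => s.eval (n : ℝ)) hsum
  have hs0 : s ≠ 0 :=
    ne_zero_of_natDegree_gt (n := 1) (by rw [natDegree_quadratic one_ne_zero]; norm_num)
  have hc : α 0 - s.eval 0 = 0 :=
    eq_zero_of_forall_sq_eval_add_neg_one_pow_mul_eq_eval hs0 _ fun n => by rw [← hα, hp]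
  exact ⟨A, B, fun n => by rw [hα n, hc, hs]; ring⟩

/-- if `(α_n)` is a sequence of positive reals such that `α_n²` is a
polynomial in `n` of degree 4, and `α_n + α_{n-1} = φ(n)` for all `n ≥ 1` for some
polynomial `φ` of degree 2 with leading coefficient 2, then `α_n = n² + Bn + A`. -/
theorem stmt6 (α : ℕ → ℝ) (hpos : ∀ n : ℕ, 0 < α n)
    (p : Polynomial ℝ) (hpdeg : p.degree = 4)
    (hp : ∀ n : ℕ, (α n) ^ 2 = p.eval (n : ℝ))
    (φ : Polynomial ℝ) (hφdeg : φ.degree = 2) (hφlead : φ.leadingCoeff = 2)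
    (hrec : ∀ n : ℕ, 1 ≤ n → α n + α (n - 1) = φ.eval (n : ℝ)) :
    ∃ A B : ℝ, ∀ n : ℕ, α n = (n : ℝ) ^ 2 + B * (n : ℝ) + A :=
  stmt6_general α p hp φ hφdeg hφlead hrec
end

section
/- The Jacobi matrix J^{MP} with entries α_n = (n+1)/(2 sin φ) on the off-diagonal and β_n = -(n + 1/2)/tan φ on the diagonal (the Meixner–Pollaczek matrix with λ = 1/2) commutes entrywise with the Hankel matrix H with H_{m,n} = cos((m+n)φ), for every φ ∈ (0,π), φ ≠ π/2. -/
/-- Entry of `J * H` where `J` is the tridiagonal matrix with diagonal `β` and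
off-diagonal `α` (`J_{k,k+1} = J_{k+1,k} = α k`). -/
noncomputable def jacobiMulR (α β : ℕ → ℝ) (H : ℕ → ℕ → ℝ) (m n : ℕ) : ℝ :=
  (if m = 0 then 0 else α (m - 1) * H (m - 1) n) + β m * H m n + α m * H (m + 1) n

/-- Entry of `H * J`. -/
noncomputable def mulJacobiR (α β : ℕ → ℝ) (H : ℕ → ℕ → ℝ) (m n : ℕ) : ℝ :=
  (if n = 0 then 0 else H m (n - 1) * α (n - 1)) + H m n * β n + H m (n + 1) * α n

/-!
Both `J H` and `H J` equal the matrix `-sin((m+n)φ)/2`. For `J H` this is the three-term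
identity `m cos(x-φ) - (2m+1) cos φ cos x + (m+1) cos(x+φ) = -sin φ sin x` at `x = (m+n)φ`;
for `H J` it follows since `H` is symmetric, so `(H J)_{m,n} = (J H)_{n,m}`.
-/

open Real

theorem mulJacobiR_eq_jacobiMulR_swap (α β : ℕ → ℝ) {H : ℕ → ℕ → ℝ}
    (hH : ∀ i j, H i j = H j i) (m n : ℕ) :
    mulJacobiR α β H m n = jacobiMulR α β H n m := by
  unfold mulJacobiR jacobiMulR
  simp only [hH m]
  split_ifs <;> ring

theorem cos_three_term (x φ t : ℝ) :
    t * cos (x - φ) - (2 * t + 1) * cos φ * cos x + (t + 1) * cos (x + φ) = -sin φ * sin x := by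
  simp only [cos_sub, cos_add]
  ring

theorem jacobiMulR_meixnerPollaczek_cos {φ : ℝ} (hs : sin φ ≠ 0) (m n : ℕ) :
    jacobiMulR (fun k => ((k : ℝ) + 1) / (2 * sin φ)) (fun k => -(((k : ℝ) + 1/2) / tan φ))
      (fun i j => cos (((i : ℝ) + (j : ℝ)) * φ)) m n = -sin (((m : ℝ) + n) * φ) / 2 := by
  unfold jacobiMulR
  rw [tan_eq_sin_div_cos]
  rcases m with _ | k
  · have key := cos_three_term (n * φ) φ 0
    simp only [if_pos, Nat.cast_zero, zero_add, zero_mul, zero_sub, mul_zero, one_mul] at key ⊢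
    rw [Nat.cast_one, show ((1 : ℝ) + n) * φ = n * φ + φ by ring]
    -- freeze the cosines, otherwise `field_simp` rewrites their arguments apart from `key`
    generalize cos (n * φ + φ) = c₁ at key ⊢
    field_simp
    linear_combination key
  · have key := cos_three_term (((k : ℝ) + 1 + n) * φ) φ (k + 1)
    simp only [if_neg (Nat.succ_ne_zero k), Nat.add_sub_cancel, Nat.cast_add, Nat.cast_one]
    rw [show ((k : ℝ) + n) * φ = ((k : ℝ) + 1 + n) * φ - φ by ring,
      show ((k : ℝ) + 1 + 1 + n) * φ = ((k : ℝ) + 1 + n) * φ + φ by ring]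
    generalize cos (((k : ℝ) + 1 + n) * φ - φ) = c₀ at key ⊢
    generalize cos (((k : ℝ) + 1 + n) * φ + φ) = c₂ at key ⊢
    field_simp
    linear_combination key

theorem stmt9_general (φ : ℝ) (hφ : φ ∈ Set.Ioo 0 Real.pi) :
    ∀ m n : ℕ,
      jacobiMulR (fun k => ((k : ℝ) + 1) / (2 * Real.sin φ))
        (fun k => -(((k : ℝ) + 1/2) / Real.tan φ))
        (fun i j => Real.cos (((i : ℝ) + (j : ℝ)) * φ)) m n =
      mulJacobiR (fun k => ((k : ℝ) + 1) / (2 * Real.sin φ))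
        (fun k => -(((k : ℝ) + 1/2) / Real.tan φ))
        (fun i j => Real.cos (((i : ℝ) + (j : ℝ)) * φ)) m n := by
  intro m n
  have hs : sin φ ≠ 0 := (sin_pos_of_pos_of_lt_pi hφ.1 hφ.2).ne'
  have hH : ∀ i j : ℕ, cos (((i : ℝ) + j) * φ) = cos (((j : ℝ) + i) * φ) := fun i j => by
    rw [add_comm]
  rw [mulJacobiR_eq_jacobiMulR_swap _ _ hH, jacobiMulR_meixnerPollaczek_cos hs,
    jacobiMulR_meixnerPollaczek_cos hs, add_comm]

/-- the Meixner–Pollaczek Jacobi matrix with `λ = 1/2`, i.e. off-diagonal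
`α_n = (n+1)/(2 sin φ)` and diagonal `β_n = -(n+1/2)/tan φ`, commutes entrywise with the
Hankel matrix `H_{m,n} = cos((m+n)φ)`, for every `φ ∈ (0,π)`, `φ ≠ π/2`. -/
theorem stmt9 (φ : ℝ) (hφ : φ ∈ Set.Ioo 0 Real.pi) (hφ' : φ ≠ Real.pi / 2) :
    ∀ m n : ℕ,
      jacobiMulR (fun k => ((k : ℝ) + 1) / (2 * Real.sin φ))
        (fun k => -(((k : ℝ) + 1/2) / Real.tan φ))
        (fun i j => Real.cos (((i : ℝ) + (j : ℝ)) * φ)) m n =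
      mulJacobiR (fun k => ((k : ℝ) + 1) / (2 * Real.sin φ))
        (fun k => -(((k : ℝ) + 1/2) / Real.tan φ))
        (fun i j => Real.cos (((i : ℝ) + (j : ℝ)) * φ)) m n :=
  stmt9_general φ hφ
end

section
/- The Laguerre-type Jacobi matrix with off-diagonal entries α_n = n+1 and diagonal entries β_n = 2n+1 (Laguerre with α = 0) commutes entrywise with both Hankel matrices H^{(1)} with entries (-1)^{m+n} and H^{(2)} with entries (-1)^{m+n}(m+n). -/
/-!
For a Hankel matrix `H i j = h (i + j)` and `s = m + n`, the coefficients `α k = k + 1`,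
`β k = 2 k + 1` give `(J H - H J) m n = (m - n) (h (s - 1) + 2 h s + h (s + 1))`; the boundary
rows and columns fit this formula because `k ↦ k + 1` vanishes at `k = -1`.
Hence `J` commutes with `H` as soon as `h` satisfies the recurrence
`h s + 2 h (s + 1) + h (s + 2) = 0`, whose solutions are `h s = (-1) ^ s (a + b s)`.
-/

theorem laguerre_jacobi_commute_hankel {h : ℕ → ℝ}
    (hh : ∀ s, h s + 2 * h (s + 1) + h (s + 2) = 0) (m n : ℕ) :
    jacobiMulR (fun k => (k : ℝ) + 1) (fun k => 2 * (k : ℝ) + 1) (fun i j => h (i + j)) m n =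
      mulJacobiR (fun k => (k : ℝ) + 1) (fun k => 2 * (k : ℝ) + 1) (fun i j => h (i + j)) m n := by
  rcases m with _ | m <;> rcases n with _ | n <;>
    simp only [jacobiMulR, mulJacobiR, if_pos, if_neg, Nat.add_sub_cancel, add_zero, zero_add,
      Nat.add_one_ne_zero, not_false_eq_true, Nat.cast_add, Nat.cast_one]
  · ring
  · have e := hh n
    ring_nf at e ⊢
    linear_combination (-(n : ℝ) - 1) * e
  · have e := hh m
    ring_nf at e ⊢
    linear_combination ((m : ℝ) + 1) * e
  · have e := hh (m + n + 1)
    ring_nf at e ⊢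
    linear_combination ((m : ℝ) - n) * e

/-- the Laguerre-type Jacobi matrix with off-diagonal `α_n = n+1` and
diagonal `β_n = 2n+1` commutes entrywise with the Hankel matrices with entries
`(-1)^{m+n}` and `(-1)^{m+n}(m+n)`. -/
theorem stmt11 :
    (∀ m n : ℕ,
      jacobiMulR (fun k => (k : ℝ) + 1) (fun k => 2 * (k : ℝ) + 1)
        (fun i j => (-1 : ℝ) ^ (i + j)) m n =
      mulJacobiR (fun k => (k : ℝ) + 1) (fun k => 2 * (k : ℝ) + 1)
        (fun i j => (-1 : ℝ) ^ (i + j)) m n) ∧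
    (∀ m n : ℕ,
      jacobiMulR (fun k => (k : ℝ) + 1) (fun k => 2 * (k : ℝ) + 1)
        (fun i j => (-1 : ℝ) ^ (i + j) * ((i : ℝ) + (j : ℝ))) m n =
      mulJacobiR (fun k => (k : ℝ) + 1) (fun k => 2 * (k : ℝ) + 1)
        (fun i j => (-1 : ℝ) ^ (i + j) * ((i : ℝ) + (j : ℝ))) m n) := by
  refine ⟨laguerre_jacobi_commute_hankel fun s => by ring, ?_⟩
  have h := laguerre_jacobi_commute_hankel (h := fun k => (-1 : ℝ) ^ k * k)
    fun s => by push_cast; ring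
  simpa only [Nat.cast_add] using h
end

section
/- Let α_n = sqrt(a(n+1)) with a > 0 (Charlier off-diagonal) and define δ₂(m,n) = -det of the 2×2 matrix with rows (α_n - α_m, α_{n-1} - α_{m-1}) and (α_{n-1} - α_{m+1}, α_{n-2} - α_m). Then for each fixed m ≥ 1, δ₂(m,n) does not vanish for all n; consequently the Charlier Jacobi matrix (with β_n = n+a) admits no nonzero commuting Hankel matrix. -/
/-!
After pulling out `√a`, `δ₂(m, n)` is `-a` times a combination of square roots of integers.
For `m ≥ 3` take `n = 2`: the products `(√m - √2)(√(m+2) - √2)` and `(√(m+1) - 1)(√(m+1) - √3)`,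
multiplied by their conjugates, both give `m(m-2)`, and the first conjugate is the larger one,
so the first product is the smaller one. For `m = 1, 2` take `n = m + 3` and compare numerically.

For a Hankel matrix `h`, entry `(m, n)` of `JH = HJ` is a three-term relation between
`h (m+n-1)`, `h (m+n)`, `h (m+n+1)`. The relations of row `0` form a second order recurrence that
runs in both directions because `α n ≠ 0` and `α (n+1) ≠ α 0`, so two consecutive zeros force
`h = 0`. The three relations on the antidiagonal `m + n = 5` are a linear system in
`h 4, h 5, h 6` with nonzero determinant.
-/

open Real

def HankelCommutes (α β h : ℕ → ℝ) : Prop :=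
  ∀ m n, jacobiMulR α β (fun i j => h (i + j)) m n = mulJacobiR α β (fun i j => h (i + j)) m n

namespace HankelCommutes

variable {α β h : ℕ → ℝ}

theorem row_zero (hc : HankelCommutes α β h) (n : ℕ) :
    α n * h n = (β 0 - β (n + 1)) * h (n + 1) + (α 0 - α (n + 1)) * h (n + 2) := by
  have := hc 0 (n + 1)
  simp only [jacobiMulR, mulJacobiR, if_true, if_neg n.succ_ne_zero, Nat.add_sub_cancel,
    zero_add] at this
  rw [show 1 + (n + 1) = n + 2 by omega] at this
  linear_combination -this

theorem succ_succ (hc : HankelCommutes α β h) (m n : ℕ) :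
    (α m - α n) * h (m + n + 1) + (β (m + 1) - β (n + 1)) * h (m + n + 2)
      + (α (m + 1) - α (n + 1)) * h (m + n + 3) = 0 := by
  have := hc (m + 1) (n + 1)
  simp only [jacobiMulR, mulJacobiR, if_neg (Nat.succ_ne_zero _), Nat.add_sub_cancel] at this
  rw [show m + (n + 1) = m + n + 1 by ring, show m + 1 + n = m + n + 1 by ring,
    show m + 1 + (n + 1) = m + n + 2 by ring, show m + 1 + (n + 1 + 1) = m + n + 3 by ring,
    show m + 1 + 1 + (n + 1) = m + n + 3 by ring] at this
  linear_combination this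

theorem eq_zero_of_consecutive_eq_zero (hc : HankelCommutes α β h) (hα : ∀ k, α k ≠ 0)
    (hα0 : ∀ k, α (k + 1) ≠ α 0) {j : ℕ} (hj : h j = 0) (hj' : h (j + 1) = 0) (k : ℕ) :
    h k = 0 := by
  have step (i : ℕ) : (h (i + 1) = 0 ∧ h (i + 2) = 0) ↔ (h i = 0 ∧ h (i + 1) = 0) := by
    have hrec := hc.row_zero i
    constructor
    · rintro ⟨h1, h2⟩
      rw [h1, h2] at hrec
      exact ⟨by simpa [hα i] using hrec, h1⟩
    · rintro ⟨h0, h1⟩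
      rw [h0, h1] at hrec
      have : (α 0 - α (i + 1)) * h (i + 2) = 0 := by linarith
      exact ⟨h1, by simpa [sub_ne_zero.2 (hα0 i).symm] using this⟩
  have pair_iff_base (i : ℕ) : (h i = 0 ∧ h (i + 1) = 0) ↔ (h 0 = 0 ∧ h 1 = 0) := by
    induction i with
    | zero => rfl
    | succ i ih => exact (step i).trans ih
  exact ((pair_iff_base k).2 ((pair_iff_base j).1 ⟨hj, hj'⟩)).1

end HankelCommutes

theorem sqrt_two_bounds : 1.414213 < √2 ∧ √2 < 1.414214 :=
  ⟨(lt_sqrt (by norm_num)).2 (by norm_num), (sqrt_lt' (by norm_num)).2 (by norm_num)⟩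

theorem sqrt_three_bounds : 1.732050 < √3 ∧ √3 < 1.732051 :=
  ⟨(lt_sqrt (by norm_num)).2 (by norm_num), (sqrt_lt' (by norm_num)).2 (by norm_num)⟩

theorem sqrt_five_bounds : 2.236067 < √5 ∧ √5 < 2.236068 :=
  ⟨(lt_sqrt (by norm_num)).2 (by norm_num), (sqrt_lt' (by norm_num)).2 (by norm_num)⟩

theorem sqrt_six_bounds : 2.449489 < √6 ∧ √6 < 2.449490 :=
  ⟨(lt_sqrt (by norm_num)).2 (by norm_num), (sqrt_lt' (by norm_num)).2 (by norm_num)⟩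

noncomputable def charlierOffDiag (a : ℝ) (k : ℕ) : ℝ := √(a * (k + 1))

section Charlier

variable {a : ℝ}

theorem charlierOffDiag_eq (ha : 0 ≤ a) (k : ℕ) : charlierOffDiag a k = √a * √(k + 1) :=
  sqrt_mul ha _

theorem charlierOffDiag_pos (ha : 0 < a) (k : ℕ) : 0 < charlierOffDiag a k :=
  sqrt_pos.2 (by positivity)

theorem charlierOffDiag_strictMono (ha : 0 < a) : StrictMono (charlierOffDiag a) :=
  fun _ _ hij => sqrt_lt_sqrt (by positivity) (by gcongr)

/-- Coefficients of the relations at `(0, 5)`, `(1, 4)`, `(2, 3)` for the unknowns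
`√a * h 4, h 5, √a * h 6`. -/
theorem charlier_antidiag_five_det_ne_zero :
    !![-√5, -5, 1 - √6; -1, -3, √2 - √5; √2 - √3, -1, √3 - 2].det ≠ 0 := by
  rw [Matrix.det_fin_three]
  simp only [Fin.isValue, Matrix.of_apply, Matrix.cons_val', Matrix.cons_val_zero,
    Matrix.cons_val_fin_one, Matrix.cons_val_one, Matrix.cons_val, Matrix.empty_val']
  obtain ⟨h2, h2'⟩ := sqrt_two_bounds
  obtain ⟨h3, h3'⟩ := sqrt_three_bounds
  obtain ⟨h5, h5'⟩ := sqrt_five_bounds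
  obtain ⟨h6, h6'⟩ := sqrt_six_bounds
  apply ne_of_gt
  nlinarith

theorem HankelCommutes.charlier_eq_zero_four_five {h : ℕ → ℝ} (ha : 0 < a)
    (hc : HankelCommutes (charlierOffDiag a) (fun k => k + a) h) : h 4 = 0 ∧ h 5 = 0 := by
  have e0 := hc.row_zero 4
  have e1 := hc.succ_succ 0 3
  have e2 := hc.succ_succ 1 2
  simp only [charlierOffDiag_eq ha.le] at e0 e1 e2
  norm_num at e0 e1 e2
  have hv := Matrix.eq_zero_of_mulVec_eq_zero charlier_antidiag_five_det_ne_zero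
    (v := ![√a * h 4, h 5, √a * h 6]) (by
      ext i
      fin_cases i <;>
        simp only [Matrix.mulVec, dotProduct, Fin.sum_univ_three, Matrix.of_apply,
          Matrix.cons_val', Matrix.cons_val_fin_one, Matrix.cons_val_zero, Matrix.cons_val_one,
          Matrix.cons_val, Pi.zero_apply, Fin.isValue, Fin.zero_eta, Fin.mk_one, Fin.reduceFinMk]
      · linear_combination -e0
      · linear_combination e1
      · linear_combination e2)
  have hsa : √a ≠ 0 := (sqrt_pos.2 ha).ne'
  exact ⟨by simpa [hsa] using congrFun hv 0, congrFun hv 1⟩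

theorem HankelCommutes.charlier_eq_zero {h : ℕ → ℝ} (ha : 0 < a)
    (hc : HankelCommutes (charlierOffDiag a) (fun k => k + a) h) (k : ℕ) : h k = 0 :=
  have ⟨h4, h5⟩ := hc.charlier_eq_zero_four_five ha
  hc.eq_zero_of_consecutive_eq_zero (fun k => (charlierOffDiag_pos ha k).ne')
    (fun k => ((charlierOffDiag_strictMono ha) k.succ_pos).ne') h4 h5 k

end Charlier

theorem sqrt_mul_sqrt_add_two_ge {t : ℝ} (ht : 9 / 8 ≤ t) : t + 3 / 4 ≤ √t * √(t + 2) := by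
  rw [← sqrt_mul (by linarith)]
  exact le_sqrt_of_sq_le (by nlinarith)

theorem sqrt_sub_sqrt_two_mul_lt {t : ℝ} (ht : 3 ≤ t) :
    (√t - √2) * (√(t + 2) - √2) < (√(t + 1) - 1) * (√(t + 1) - √3) := by
  have hx := sq_sqrt (show 0 ≤ t by linarith)
  have hy := sq_sqrt (show 0 ≤ t + 1 by linarith)
  have hz := sq_sqrt (show 0 ≤ t + 2 by linarith)
  have h2 := sq_sqrt (show (0 : ℝ) ≤ 2 by norm_num)
  have h3 := sq_sqrt (show (0 : ℝ) ≤ 3 by norm_num)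
  have hxz := sqrt_mul_sqrt_add_two_ge (by linarith : 9 / 8 ≤ t)
  have h3' : √3 < 7 / 4 := sqrt_three_bounds.2.trans (by norm_num)
  set x := √t
  set y := √(t + 1)
  set z := √(t + 2)
  have hx2 : √2 < x := sqrt_lt_sqrt (by norm_num) (by linarith)
  have hz2 : √2 < z := sqrt_lt_sqrt (by norm_num) (by linarith)
  have hy3 : √3 < y := sqrt_lt_sqrt (by norm_num) (by linarith)
  have h3pos : 0 < √3 := by positivity
  have hsq : ((1 + √3) * y) ^ 2 ≤ (√2 * (x + z)) ^ 2 := by nlinarith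
  have hlin : (1 + √3) * y ≤ √2 * (x + z) :=
    (pow_le_pow_iff_left₀ (by positivity) (by positivity) two_ne_zero).1 hsq
  have hconj : (y + 1) * (y + √3) < (x + √2) * (z + √2) := by nlinarith
  have hprod : ((x - √2) * (z - √2)) * ((x + √2) * (z + √2))
      = ((y - 1) * (y - √3)) * ((y + 1) * (y + √3)) := by
    have conj (p q r s : ℝ) :
        (p - q) * (r - s) * ((p + q) * (r + s)) = (p ^ 2 - q ^ 2) * (r ^ 2 - s ^ 2) := by
      ring
    rw [conj, conj, hx, hy, hz, h2, h3]
    ring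
  have hP : 0 < (x - √2) * (z - √2) := mul_pos (by linarith) (by linarith)
  have hU : 0 < (y + 1) * (y + √3) := mul_pos (by linarith) (by linarith)
  exact lt_of_mul_lt_mul_right ((mul_lt_mul_of_pos_left hconj hP).trans_eq hprod) hU.le

theorem sqrt_five_sub_sqrt_two_mul_lt : (√5 - √2) * (√3 - √2) < 2 - √3 := by
  obtain ⟨h2, h2'⟩ := sqrt_two_bounds
  obtain ⟨h3, h3'⟩ := sqrt_three_bounds
  obtain ⟨h5, h5'⟩ := sqrt_five_bounds
  nlinarith

theorem sqrt_six_sub_sqrt_three_mul_lt : (√6 - √3) * (2 - √3) < (√5 - √2) * (√5 - 2) := by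
  obtain ⟨h2, h2'⟩ := sqrt_two_bounds
  obtain ⟨h3, h3'⟩ := sqrt_three_bounds
  obtain ⟨h5, h5'⟩ := sqrt_five_bounds
  obtain ⟨h6, h6'⟩ := sqrt_six_bounds
  nlinarith

theorem neg_det_sqrt_mul_eq_neg_mul {a : ℝ} (ha : 0 ≤ a) (p q r s u v : ℝ) :
    -((√(a * p) - √(a * q)) * (√(a * r) - √(a * q))
        - (√(a * s) - √(a * u)) * (√(a * s) - √(a * v)))
      = -a * ((√p - √q) * (√r - √q) - (√s - √u) * (√s - √v)) := by
  simp only [sqrt_mul ha]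
  linear_combination (-((√p - √q) * (√r - √q) - (√s - √u) * (√s - √v))) * mul_self_sqrt ha

/-- for the Charlier off-diagonal `α_n = sqrt(a(n+1))`, `a > 0`, and
`δ₂(m,n) = -det [[α_n - α_m, α_{n-1} - α_{m-1}], [α_{n-1} - α_{m+1}, α_{n-2} - α_m]]`,
for every fixed `m ≥ 1` the quantity `δ₂(m,n)` does not vanish for all `n`; consequently
the Charlier Jacobi matrix (with `β_n = n + a`) admits no nonzero commuting Hankel
matrix. -/
theorem stmt14 (a : ℝ) (ha : 0 < a) :
    (∀ m : ℕ, 1 ≤ m → ∃ n : ℕ, 2 ≤ n ∧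
      -( (Real.sqrt (a * (n + 1)) - Real.sqrt (a * (m + 1)))
            * (Real.sqrt (a * ((n : ℝ) - 2 + 1)) - Real.sqrt (a * (m + 1)))
         - (Real.sqrt (a * ((n : ℝ) - 1 + 1)) - Real.sqrt (a * ((m : ℝ) - 1 + 1)))
            * (Real.sqrt (a * ((n : ℝ) - 1 + 1)) - Real.sqrt (a * ((m : ℝ) + 1 + 1))) )
        ≠ 0) ∧
    (∀ h : ℕ → ℝ,
      (∀ m n : ℕ,
        jacobiMulR (fun k => Real.sqrt (a * ((k : ℝ) + 1))) (fun k => (k : ℝ) + a)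
          (fun i j => h (i + j)) m n =
        mulJacobiR (fun k => Real.sqrt (a * ((k : ℝ) + 1))) (fun k => (k : ℝ) + a)
          (fun i j => h (i + j)) m n) →
      ∀ k : ℕ, h k = 0) := by
  refine ⟨fun m hm => ?_, fun h hc => HankelCommutes.charlier_eq_zero ha hc⟩
  simp only [neg_det_sqrt_mul_eq_neg_mul ha.le, ne_eq, mul_eq_zero, neg_eq_zero, ha.ne', false_or]
  obtain rfl | rfl | hm3 : m = 1 ∨ m = 2 ∨ 3 ≤ m := by omega
  · refine ⟨4, by norm_num, ?_⟩
    norm_num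
    exact sub_ne_zero.2 sqrt_five_sub_sqrt_two_mul_lt.ne
  · refine ⟨5, by norm_num, ?_⟩
    norm_num
    exact sub_ne_zero.2 sqrt_six_sub_sqrt_three_mul_lt.ne
  · refine ⟨2, le_rfl, ?_⟩
    have := sqrt_sub_sqrt_two_mul_lt (show (3 : ℝ) ≤ m by exact_mod_cast hm3)
    rw [show (m : ℝ) + 2 = m + 1 + 1 by ring] at this
    norm_num
    exact sub_ne_zero.2 (ne_of_gt (by linarith))
end

section
/- Let (h_n) be a nonzero real sequence with h_n = λ^n (1 + O(1/n)) as n → ∞ for some λ ≠ 0, satisfying for fixed m the relation A(n)-A(m)) h_{n+m+1} + (β_n - β_m) h_{n+m} + (A(n-1)-A(m-1)) h_{n+m-1} = 0 where A(n) → 0 and β_n → 0 as n → ∞. Then A(m) λ² + β_m λ + A(m-1) = 0 for every m. -/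
/-!
Divide the recurrence at the index `n + m - 1` by `h (n + m - 1)`: its three coefficients tend to
`-A m`, `-β m` and `-A (m - 1)`, while `h (k + 1) / h k → λ` because `h k / λ ^ k → 1`.
In the limit the normalized relation becomes `A m λ² + β m λ + A (m - 1) = 0`.
-/

open Filter Asymptotics Topology

lemma eventually_ne_zero_of_tendsto_div_pow {h : ℕ → ℝ} {lam : ℝ}
    (hh : Tendsto (fun n => h n / lam ^ n) atTop (𝓝 1)) : ∀ᶠ n in atTop, h n ≠ 0 := by
  filter_upwards [hh.eventually_ne one_ne_zero] with n hn hzero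
  simp [hzero] at hn

lemma tendsto_succ_div_of_tendsto_div_pow {h : ℕ → ℝ} {lam : ℝ} (hlam : lam ≠ 0)
    (hh : Tendsto (fun n => h n / lam ^ n) atTop (𝓝 1)) :
    Tendsto (fun n => h (n + 1) / h n) atTop (𝓝 lam) := by
  have hlim : Tendsto (fun n => lam * ((h (n + 1) / lam ^ (n + 1)) / (h n / lam ^ n))) atTop
      (𝓝 (lam * (1 / 1))) :=
    ((hh.comp (tendsto_add_atTop_nat 1)).div hh one_ne_zero).const_mul lam
  rw [div_one, mul_one] at hlim
  refine hlim.congr fun n => ?_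
  have : lam ^ n ≠ 0 := pow_ne_zero n hlam
  rw [pow_succ]
  field_simp

lemma quadratic_eq_zero_of_three_term_relation {h a b c : ℕ → ℝ} {lam a₀ b₀ c₀ : ℝ}
    (hne : ∀ᶠ n in atTop, h n ≠ 0)
    (hratio : Tendsto (fun n => h (n + 1) / h n) atTop (𝓝 lam))
    (ha : Tendsto a atTop (𝓝 a₀)) (hb : Tendsto b atTop (𝓝 b₀))
    (hc : Tendsto c atTop (𝓝 c₀))
    {k : ℕ → ℕ} (hk : Tendsto k atTop atTop)
    (hrel : ∀ᶠ n in atTop, a n * h (k n + 2) + b n * h (k n + 1) + c n * h (k n) = 0) :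
    a₀ * lam ^ 2 + b₀ * lam + c₀ = 0 := by
  set r : ℕ → ℝ := fun n => h (n + 1) / h n
  have hr : Tendsto (fun n => r (k n)) atTop (𝓝 lam) := hratio.comp hk
  have hr' : Tendsto (fun n => r (k n + 1)) atTop (𝓝 lam) :=
    hratio.comp ((tendsto_add_atTop_nat 1).comp hk)
  have hlim : Tendsto (fun n => a n * r (k n + 1) * r (k n) + b n * r (k n) + c n) atTop
      (𝓝 (a₀ * lam * lam + b₀ * lam + c₀)) :=
    (((ha.mul hr').mul hr).add (hb.mul hr)).add hc
  have hzero :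
      (fun n => a n * r (k n + 1) * r (k n) + b n * r (k n) + c n) =ᶠ[atTop] fun _ => 0 := by
    filter_upwards [hrel, hk.eventually hne,
      hk.eventually ((tendsto_add_atTop_nat 1).eventually hne)] with n hn h₀ h₁
    simp only [r]
    field_simp
    linear_combination hn
  have := tendsto_nhds_unique hlim (tendsto_const_nhds.congr' hzero.symm)
  linear_combination this

/-- let `(h_n)` be a nonzero real sequence with
`h_n = λ^n (1 + O(1/n))` as `n → ∞`, `λ ≠ 0`, satisfying for every fixed `m` and all
sufficiently large `n` the relation
`(A(n) - A(m)) h_{n+m+1} + (β_n - β_m) h_{n+m} + (A(n-1) - A(m-1)) h_{n+m-1} = 0`,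
where `A(n) → 0` and `β_n → 0`. Then `A(m) λ² + β_m λ + A(m-1) = 0` for every `m`. -/
theorem stmt16 (A β h : ℕ → ℝ) (lam : ℝ) (hlam : lam ≠ 0)
    (hA : Tendsto A atTop (nhds 0)) (hβ : Tendsto β atTop (nhds 0))
    (hasymp : (fun n : ℕ => h n / lam ^ n - 1) =O[atTop] fun n : ℕ => (1 : ℝ) / n)
    (hrel : ∀ m : ℕ, ∀ᶠ n : ℕ in atTop,
      (A n - A m) * h (n + m + 1) + (β n - β m) * h (n + m)
        + (A (n - 1) - A (m - 1)) * h (n + m - 1) = 0) :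
    ∀ m : ℕ, A m * lam ^ 2 + β m * lam + A (m - 1) = 0 := by
  intro m
  have hh : Tendsto (fun n => h n / lam ^ n) atTop (𝓝 1) := by
    simpa using (hasymp.trans_tendsto tendsto_one_div_atTop_nhds_zero_nat).add_const 1
  have hsub : Tendsto (fun n : ℕ => n - 1) atTop atTop := tendsto_sub_atTop_nat 1
  have key := quadratic_eq_zero_of_three_term_relation (eventually_ne_zero_of_tendsto_div_pow hh)
    (tendsto_succ_div_of_tendsto_div_pow hlam hh) (hA.sub_const (A m)) (hβ.sub_const (β m))
    ((hA.comp hsub).sub_const (A (m - 1))) (hsub.comp (tendsto_add_atTop_nat m)) <| by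
      filter_upwards [hrel m, eventually_ge_atTop 1] with n hn hn₁
      have h₁ : n + m - 1 + 1 = n + m := by omega
      have h₂ : n + m - 1 + 2 = n + m + 1 := by omega
      simpa [h₁, h₂] using hn
  linear_combination -key
end

section
/- For the Wilson parameters (a,b,c,d) = (3/4, b, b-1/2, 1/4), the Jacobi coefficients are polynomials in n: α_n^W = (1/8)(n+1)(2n+4b-1) and β_n^W = (1/16)(8n² + 4(4b-1)n + 8b - 3), where α_n^W = sqrt(A_n C_{n+1}) and β_n^W = A_n + C_n - a² with A_n = (n+a+b)(n+a+c)(n+a+d)(n+a+b+c+d-1)/((2n+a+b+c+d-1)(2n+a+b+c+d)) and C_n = n(n+b+c-1)(n+b+d-1)(n+c+d-1)/((2n+a+b+c+d-2)(2n+a+b+c+d-1)). -/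
/-!
With `a = 3/4`, `c = b - 1/2`, `d = 1/4` the denominators of `A_n` and `C_n` are
`4 (n + b - 1/4)(n + b + 1/4)` and `4 (n + b - 3/4)(n + b - 1/4)`, and the factors
`n + b + 1/4 = n + a + c` and `n + b - 3/4 = n + b + d - 1` cancel against the numerators.
What is left of `A_n` has denominator `n + b - 1/4` and numerator divisible by `n + b + 3/4`,
while `C_{n+1}` has these two the other way round, so `A_n C_{n+1}` is a perfect square; and
`A_n`, `C_n` now share the denominator `n + b - 1/4`, which divides the sum of their numerators.
-/

noncomputable def wilsonA (a b c d x : ℝ) : ℝ :=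
  (x + a + b) * (x + a + c) * (x + a + d) * (x + a + b + c + d - 1) /
    ((2 * x + a + b + c + d - 1) * (2 * x + a + b + c + d))

noncomputable def wilsonC (a b c d x : ℝ) : ℝ :=
  x * (x + b + c - 1) * (x + b + d - 1) * (x + c + d - 1) /
    ((2 * x + a + b + c + d - 2) * (2 * x + a + b + c + d - 1))

section SpecialParameters

variable {b : ℝ}

theorem wilsonA_special (hb : 1/4 < b) {x : ℝ} (hx : 0 ≤ x) :
    wilsonA (3/4) b (b - 1/2) (1/4) x =
      (x + 1) * (x + b + 3/4) * (2 * x + 4 * b - 1) / (8 * (x + b - 1/4)) := by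
  unfold wilsonA
  rw [div_eq_div_iff (mul_pos (by linarith) (by linarith)).ne' (by linarith)]
  ring

-- For `n = 0` both sides vanish although the cancelled factor `n + b - 3/4` may be zero.
theorem wilsonC_special (hb : 1/4 < b) (n : ℕ) :
    wilsonC (3/4) b (b - 1/2) (1/4) n =
      n * (n + b - 5/4) * (2 * n + 4 * b - 3) / (8 * (n + b - 1/4)) := by
  rcases Nat.eq_zero_or_pos n with rfl | hn
  · simp [wilsonC]
  have hn : (1 : ℝ) ≤ n := by exact_mod_cast hn
  unfold wilsonC
  rw [div_eq_div_iff (mul_pos (by linarith) (by linarith)).ne' (by linarith)]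
  ring

theorem sqrt_wilsonA_mul_wilsonC_succ_special (hb : 1/4 < b) (n : ℕ) :
    Real.sqrt (wilsonA (3/4) b (b - 1/2) (1/4) n * wilsonC (3/4) b (b - 1/2) (1/4) (n + 1 : ℕ)) =
      (1/8) * ((n : ℝ) + 1) * (2 * (n : ℝ) + 4 * b - 1) := by
  have hn : (0 : ℝ) ≤ n := n.cast_nonneg
  have hsq : wilsonA (3/4) b (b - 1/2) (1/4) n * wilsonC (3/4) b (b - 1/2) (1/4) (n + 1 : ℕ) =
      ((1/8) * ((n : ℝ) + 1) * (2 * (n : ℝ) + 4 * b - 1)) ^ 2 := by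
    rw [wilsonA_special hb hn, wilsonC_special hb]
    push_cast
    rw [div_mul_div_comm, div_eq_iff (mul_pos (by linarith) (by linarith)).ne']
    ring
  rw [hsq, Real.sqrt_sq (by nlinarith)]

theorem wilsonA_add_wilsonC_sub_special (hb : 1/4 < b) (n : ℕ) :
    wilsonA (3/4) b (b - 1/2) (1/4) n + wilsonC (3/4) b (b - 1/2) (1/4) n - (3/4) ^ 2 =
      (1/16) * (8 * (n : ℝ) ^ 2 + 4 * (4 * b - 1) * (n : ℝ) + 8 * b - 3) := by
  have hn : (0 : ℝ) ≤ n := n.cast_nonneg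
  rw [wilsonA_special hb hn, wilsonC_special hb, ← add_div, sub_eq_iff_eq_add,
    div_eq_iff (by linarith)]
  ring

end SpecialParameters

/-- for the Wilson parameters `(a,b,c,d) = (3/4, b, b-1/2, 1/4)` with
`b > 1/4`, the Jacobi coefficients `α_n^W = sqrt(A_n C_{n+1})` and
`β_n^W = A_n + C_n - a²` are the polynomials `(1/8)(n+1)(2n+4b-1)` and
`(1/16)(8n² + 4(4b-1)n + 8b - 3)` respectively. -/
theorem stmt17 (b : ℝ) (hb : 1/4 < b) (a c d : ℝ)
    (ha : a = 3/4) (hc : c = b - 1/2) (hd : d = 1/4)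
    (A C : ℕ → ℝ)
    (hA : ∀ n : ℕ, A n =
      (((n : ℝ) + a + b) * ((n : ℝ) + a + c) * ((n : ℝ) + a + d)
          * ((n : ℝ) + a + b + c + d - 1)) /
        ((2 * (n : ℝ) + a + b + c + d - 1) * (2 * (n : ℝ) + a + b + c + d)))
    (hC : ∀ n : ℕ, C n =
      ((n : ℝ) * ((n : ℝ) + b + c - 1) * ((n : ℝ) + b + d - 1)
          * ((n : ℝ) + c + d - 1)) /
        ((2 * (n : ℝ) + a + b + c + d - 2) * (2 * (n : ℝ) + a + b + c + d - 1))) :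
    (∀ n : ℕ, Real.sqrt (A n * C (n + 1)) =
      (1/8) * ((n : ℝ) + 1) * (2 * (n : ℝ) + 4 * b - 1)) ∧
    (∀ n : ℕ, A n + C n - a ^ 2 =
      (1/16) * (8 * (n : ℝ) ^ 2 + 4 * (4 * b - 1) * (n : ℝ) + 8 * b - 3)) := by
  subst ha hc hd
  obtain rfl : A = fun n : ℕ => wilsonA (3/4) b (b - 1/2) (1/4) n := funext hA
  obtain rfl : C = fun n : ℕ => wilsonC (3/4) b (b - 1/2) (1/4) n := funext hC
  exact ⟨sqrt_wilsonA_mul_wilsonC_succ_special hb, wilsonA_add_wilsonC_sub_special hb⟩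
end

section
/- For the Laguerre family with parameter α, let α_n^L = sqrt((n+1)(n+α+1)) and β_n^L = 2n+α+1. If a nonzero Hankel matrix commutes with the associated Jacobi matrix, then α = 0. -/
open Filter Topology Real

namespace S19



noncomputable def aL (α : ℝ) (k : ℕ) : ℝ := Real.sqrt (((k : ℝ) + 1) * ((k : ℝ) + α + 1))

lemma aL_pos {α : ℝ} (hα : -1 < α) (k : ℕ) : 0 < aL α k := by
  apply Real.sqrt_pos.mpr
  have : (0:ℝ) ≤ (k:ℝ) := k.cast_nonneg
  nlinarith

lemma aL_sq {α : ℝ} (hα : -1 < α) (k : ℕ) :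
    aL α k ^ 2 = ((k : ℝ) + 1) * ((k : ℝ) + α + 1) := by
  apply Real.sq_sqrt
  have : (0:ℝ) ≤ (k:ℝ) := k.cast_nonneg
  nlinarith

lemma tendsto_lin_atTop (d q : ℝ) (hd : 0 < d) :
    Tendsto (fun j : ℕ => d * (j:ℝ) + q) atTop atTop := by
  exact tendsto_atTop_add_const_right _ _ ((tendsto_natCast_atTop_atTop).const_mul_atTop hd)

lemma tendsto_inv_lin (d q : ℝ) (hd : 0 < d) :
    Tendsto (fun j : ℕ => (d * (j:ℝ) + q)⁻¹) atTop (𝓝 0) :=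
  (tendsto_lin_atTop d q hd).inv_tendsto_atTop

lemma sqrt_lower {X δ : ℝ} (hX : 0 < X) (hδ : 0 ≤ δ) (hle : δ ≤ X^2) :
    X - δ/X ≤ Real.sqrt (X^2 - δ) := by
  have h1 : X - δ/X = (X^2 - δ)/X := by field_simp
  rw [h1]
  apply (Real.le_sqrt (div_nonneg (by linarith) (le_of_lt hX)) (by linarith)).mpr
  rw [div_pow, div_le_iff₀ (by positivity)]
  nlinarith

lemma tendsto_E {α : ℝ} (hα : -1 < α) :
    Tendsto (fun k : ℕ => aL α k - ((k:ℝ) + 1 + α/2)) atTop (𝓝 0) := by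
  have key : ∀ k : ℕ, -(α^2/4) * (1 * (k:ℝ) + (1 + α/2))⁻¹ ≤ aL α k - ((k:ℝ) + 1 + α/2)
      ∧ aL α k - ((k:ℝ) + 1 + α/2) ≤ 0 := by
    intro k
    have hk : (0:ℝ) ≤ (k:ℝ) := k.cast_nonneg
    have hX : (0:ℝ) < (k:ℝ) + 1 + α/2 := by nlinarith
    have hrw : aL α k = Real.sqrt (((k:ℝ)+1+α/2)^2 - α^2/4) := by
      unfold aL; congr 1; ring
    constructor
    · have hlb := sqrt_lower (δ := α^2/4) hX (by positivity) (by nlinarith)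
      rw [hrw]
      have h2 : -(α^2/4) * (1 * (k:ℝ) + (1 + α/2))⁻¹ = -((α^2/4)/((k:ℝ)+1+α/2)) := by
        rw [div_eq_mul_inv]; ring_nf
      rw [h2]
      linarith
    · rw [hrw]
      have h2 : Real.sqrt (((k:ℝ)+1+α/2)^2 - α^2/4) ≤ Real.sqrt (((k:ℝ)+1+α/2)^2) :=
        Real.sqrt_le_sqrt (by nlinarith [sq_nonneg α])
      rw [Real.sqrt_sq (le_of_lt hX)] at h2
      linarith
  apply tendsto_of_tendsto_of_tendsto_of_le_of_le
    (g := fun k : ℕ => -(α^2/4) * (1 * (k:ℝ) + (1 + α/2))⁻¹) (h := fun _ => (0:ℝ))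
  · have := (tendsto_inv_lin 1 (1+α/2) one_pos).const_mul (-(α^2/4))
    simpa using this
  · exact tendsto_const_nhds
  · exact fun k => (key k).1
  · exact fun k => (key k).2





lemma tendsto_inv_nat : Tendsto (fun j : ℕ => ((j:ℝ)+1)⁻¹) atTop (𝓝 0) := by
  have := tendsto_inv_lin 1 1 one_pos
  refine this.congr (fun j => by norm_num)

lemma tendsto_div_linear (b d p q : ℝ) (hd : 0 < d) (f g : ℕ → ℝ)
    (hf : Tendsto (fun j : ℕ => f j - (b*(j:ℝ) + p)) atTop (𝓝 0))
    (hg : Tendsto (fun j : ℕ => g j - (d*(j:ℝ) + q)) atTop (𝓝 0)) :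
    Tendsto (fun j : ℕ => f j / g j) atTop (𝓝 (b/d)) := by
  have key : ∀ (c p' : ℝ) (u : ℕ → ℝ), Tendsto (fun j : ℕ => u j - (c*(j:ℝ) + p')) atTop (𝓝 0) →
      Tendsto (fun j : ℕ => u j * ((j:ℝ)+1)⁻¹) atTop (𝓝 c) := by
    intro c p' u hu
    have h1 : Tendsto (fun j : ℕ => (u j - (c*(j:ℝ)+p')) * ((j:ℝ)+1)⁻¹ + c
        + (p' - c) * ((j:ℝ)+1)⁻¹) atTop (𝓝 (0 * 0 + c + (p' - c) * 0)) := by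
      exact ((hu.mul tendsto_inv_nat).add_const c).add (tendsto_inv_nat.const_mul _)
    rw [show (0:ℝ) * 0 + c + (p' - c) * 0 = c by ring] at h1
    refine h1.congr (fun j => ?_)
    have hj : ((j:ℝ)+1) ≠ 0 := by positivity
    field_simp
    ring
  have h1 := key b p f hf
  have h2 := key d q g hg
  have h3 := h1.div h2 (ne_of_gt hd)
  refine h3.congr (fun j => ?_)
  rcases eq_or_ne (g j) 0 with hg0 | hg0
  · simp [hg0]
  · have hj : ((j:ℝ)+1) ≠ 0 := by positivity
    simp only [Pi.div_apply]
    field_simp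

lemma tendsto_E_comp {α : ℝ} (hα : -1 < α) (m c : ℕ) (hm : 0 < m) :
    Tendsto (fun j : ℕ => aL α (m*j+c) - ((m:ℝ)*(j:ℝ)+(c:ℝ)+1+α/2)) atTop (𝓝 0) := by
  have hmap : Tendsto (fun j : ℕ => m*j+c) atTop atTop := by
    refine tendsto_atTop_mono (fun j => ?_) tendsto_id
    calc (j:ℕ) = 1*j := (one_mul j).symm
    _ ≤ m*j := Nat.mul_le_mul_right j hm
    _ ≤ m*j+c := Nat.le_add_right _ _
  have := (tendsto_E hα).comp hmap
  refine this.congr (fun j => ?_)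
  simp only [Function.comp]
  push_cast
  ring

/-- difference limit -/
lemma TD {α : ℝ} (hα : -1 < α) (cA cB cC : ℕ) :
    Tendsto (fun j : ℕ => aL α (2*j+cA) - aL α (j+cB) - aL α (j+cC)) atTop
      (𝓝 ((cA:ℝ) - cB - cC - 1 - α/2)) := by
  have eA := tendsto_E_comp hα 2 cA two_pos
  have eB := tendsto_E_comp hα 1 cB one_pos
  have eC := tendsto_E_comp hα 1 cC one_pos
  simp only [one_mul] at eB eC
  have h := ((eA.sub eB).sub eC).add_const ((cA:ℝ) - cB - cC - 1 - α/2)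
  rw [show (0:ℝ) - 0 - 0 + ((cA:ℝ) - cB - cC - 1 - α/2) = (cA:ℝ) - cB - cC - 1 - α/2 by ring] at h
  refine h.congr (fun j => ?_)
  push_cast
  ring

/-- ratio limit -/
lemma TR {α : ℝ} (hα : -1 < α) (cA cB cC : ℕ) :
    Tendsto (fun j : ℕ => aL α (2*j+cA) / (aL α (j+cB) + aL α (j+cC))) atTop (𝓝 1) := by
  have eA := tendsto_E_comp hα 2 cA two_pos
  have eB := tendsto_E_comp hα 1 cB one_pos
  have eC := tendsto_E_comp hα 1 cC one_pos
  simp only [one_mul] at eB eC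
  have h := tendsto_div_linear 2 2 ((cA:ℝ)+1+α/2) ((cB:ℝ)+(cC:ℝ)+2+α) two_pos
    (fun j => aL α (2*j+cA)) (fun j => aL α (j+cB) + aL α (j+cC))
    (eA.congr (fun j => by push_cast; ring))
    ((by simpa using eB.add eC : Tendsto (fun j : ℕ => (aL α (j+cB) - ((j:ℝ)+(cB:ℝ)+1+α/2)) + (aL α (j+cC) - ((j:ℝ)+(cC:ℝ)+1+α/2))) atTop (𝓝 0)).congr (fun j => by push_cast; ring))
  rw [show (2:ℝ)/2 = 1 by norm_num] at h
  exact h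

/-- inverse of sum limit -/
lemma TInv {α : ℝ} (hα : -1 < α) (cB cC : ℕ) :
    Tendsto (fun j : ℕ => (aL α (j+cB) + aL α (j+cC))⁻¹) atTop (𝓝 0) := by
  apply Tendsto.inv_tendsto_atTop
  have eB := tendsto_E_comp hα 1 cB one_pos
  have eC := tendsto_E_comp hα 1 cC one_pos
  simp only [one_mul] at eB eC
  have h := (tendsto_lin_atTop 2 ((cB:ℝ)+(cC:ℝ)+2+α) two_pos).atTop_add (eB.add eC)
  refine h.congr (fun j => ?_)
  push_cast
  ring

/-- aL(2j+c)/(d j + e) limit -/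
lemma Tdivlin {α : ℝ} (hα : -1 < α) (c : ℕ) (d e : ℝ) (hd : 0 < d) :
    Tendsto (fun j : ℕ => aL α (2*j+c) / (d*(j:ℝ)+e)) atTop (𝓝 (2/d)) := by
  have eA := tendsto_E_comp hα 2 c two_pos
  exact tendsto_div_linear 2 d ((c:ℝ)+1+α/2) e hd _ _
    (eA.congr (fun j => by push_cast; ring))
    ((tendsto_const_nhds : Tendsto (fun _ : ℕ => (0:ℝ)) atTop (𝓝 0)).congr (fun j => by ring))





lemma kappa1_lim {α : ℝ} (hα : -1 < α) :
    Tendsto (fun j : ℕ => ((j:ℝ)+2)*(aL α (j+2) - aL α j) - aL α (2*j+3)) atTop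
      (𝓝 (-α/2)) := by
  have h := (TR hα 3 2 0).mul (TD hα 3 2 0)
  rw [show (1:ℝ) * (((3:ℕ):ℝ) - ((2:ℕ):ℝ) - ((0:ℕ):ℝ) - 1 - α/2) = -α/2 by push_cast; ring] at h
  refine h.congr (fun j => ?_)
  have hB := aL_sq hα (j+2)
  have hC := aL_sq hα j
  have hA := aL_sq hα (2*j+3)
  have hBC : 0 < aL α (j+2) + aL α (j+0) := add_pos (aL_pos hα _) (aL_pos hα _)
  push_cast at hA hB hC
  have e0 : aL α (j+0) = aL α j := rfl
  rw [e0] at hBC ⊢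
  rw [div_mul_eq_mul_div, div_eq_iff (ne_of_gt hBC)]
  linear_combination hA - ((j:ℝ)+2)*hB + ((j:ℝ)+2)*hC



lemma kappa2_lim {α : ℝ} (hα : -1 < α) :
    Tendsto (fun j : ℕ => ((j:ℝ)+2)*(aL α (j+3) - aL α (j+1)) - aL α (2*j+4) + aL α 0) atTop
      (𝓝 (aL α 0 - 1 - α/2)) := by
  have h := (((TR hα 4 3 1).mul (TD hα 4 3 1)).sub ((TInv hα 3 1).const_mul (1+α))).add_const
    (aL α 0)
  rw [show (1:ℝ) * (((4:ℕ):ℝ) - ((3:ℕ):ℝ) - ((1:ℕ):ℝ) - 1 - α/2) - (1+α)*0 + aL α 0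
      = aL α 0 - 1 - α/2 by push_cast; ring] at h
  refine h.congr (fun j => ?_)
  have hB := aL_sq hα (j+3)
  have hC := aL_sq hα (j+1)
  have hA := aL_sq hα (2*j+4)
  have hBC : 0 < aL α (j+3) + aL α (j+1) := add_pos (aL_pos hα _) (aL_pos hα _)
  push_cast at hA hB hC
  have key2 : aL α (2*j+4) * (aL α (2*j+4) - aL α (j+3) - aL α (j+1))
      = (((j:ℝ)+2)*(aL α (j+3) - aL α (j+1)) - aL α (2*j+4)) * (aL α (j+3) + aL α (j+1))
        + (1+α) := by
    linear_combination hA - ((j:ℝ)+2)*hB + ((j:ℝ)+2)*hC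
  rw [div_mul_eq_mul_div, key2, add_div, mul_div_cancel_right₀ _ (ne_of_gt hBC), div_eq_mul_inv]
  ring

lemma lambda1_lim {α : ℝ} (hα : -1 < α) :
    Tendsto (fun j : ℕ => (2*(j:ℝ)+3)*(aL α (j+1) - aL α j) - aL α (2*j+2)) atTop
      (𝓝 (-α/2)) := by
  have h := (TR hα 2 1 0).mul (TD hα 2 1 0)
  rw [show (1:ℝ) * (((2:ℕ):ℝ) - ((1:ℕ):ℝ) - ((0:ℕ):ℝ) - 1 - α/2) = -α/2 by push_cast; ring] at h
  refine h.congr (fun j => ?_)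
  have hB := aL_sq hα (j+1)
  have hC := aL_sq hα j
  have hA := aL_sq hα (2*j+2)
  have hBC : 0 < aL α (j+1) + aL α (j+0) := add_pos (aL_pos hα _) (aL_pos hα _)
  push_cast at hA hB hC
  have e0 : aL α (j+0) = aL α j := rfl
  rw [e0] at hBC ⊢
  rw [div_mul_eq_mul_div, div_eq_iff (ne_of_gt hBC)]
  linear_combination hA - (2*(j:ℝ)+3)*hB + (2*(j:ℝ)+3)*hC

lemma lambda2_lim {α : ℝ} (hα : -1 < α) :
    Tendsto (fun j : ℕ => (2*(j:ℝ)+3)*(aL α (j+2) - aL α (j+1)) - aL α (2*j+3) + aL α 0) atTop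
      (𝓝 (aL α 0 - 1 - α/2)) := by
  have h := (((TR hα 3 2 1).mul (TD hα 3 2 1)).sub ((TInv hα 2 1).const_mul (1+α))).add_const
    (aL α 0)
  rw [show (1:ℝ) * (((3:ℕ):ℝ) - ((2:ℕ):ℝ) - ((1:ℕ):ℝ) - 1 - α/2) - (1+α)*0 + aL α 0
      = aL α 0 - 1 - α/2 by push_cast; ring] at h
  refine h.congr (fun j => ?_)
  have hB := aL_sq hα (j+2)
  have hC := aL_sq hα (j+1)
  have hA := aL_sq hα (2*j+3)
  have hBC : 0 < aL α (j+2) + aL α (j+1) := add_pos (aL_pos hα _) (aL_pos hα _)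
  push_cast at hA hB hC
  have key2 : aL α (2*j+3) * (aL α (2*j+3) - aL α (j+2) - aL α (j+1))
      = ((2*(j:ℝ)+3)*(aL α (j+2) - aL α (j+1)) - aL α (2*j+3)) * (aL α (j+2) + aL α (j+1))
        + (1+α) := by
    linear_combination hA - (2*(j:ℝ)+3)*hB + (2*(j:ℝ)+3)*hC
  rw [div_mul_eq_mul_div, key2, add_div, mul_div_cancel_right₀ _ (ne_of_gt hBC), div_eq_mul_inv]
  ring


end S19

open S19

/-- for the Laguerre family with parameter `α > -1`, off-diagonal
`α_n^L = sqrt((n+1)(n+α+1))` and diagonal `β_n^L = 2n+α+1`, if a nonzero Hankel matrix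
commutes with the associated Jacobi matrix, then `α = 0`. -/

theorem stmt19 (α : ℝ) (hα : -1 < α)
    (h : ℕ → ℝ) (hne : ∃ k : ℕ, h k ≠ 0)
    (hcomm : ∀ m n : ℕ,
      jacobiMulR (fun k => Real.sqrt (((k : ℝ) + 1) * ((k : ℝ) + α + 1)))
        (fun k => 2 * (k : ℝ) + α + 1) (fun i j => h (i + j)) m n =
      mulJacobiR (fun k => Real.sqrt (((k : ℝ) + 1) * ((k : ℝ) + α + 1)))
        (fun k => 2 * (k : ℝ) + α + 1) (fun i j => h (i + j)) m n) :
    α = 0 := by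
  by_contra hα0
  -- Basic relations
  have hrel0 : ∀ n : ℕ, aL α n * h n + (2*(n:ℝ)+2) * h (n+1) + (aL α (n+1) - aL α 0) * h (n+2) = 0 := by
    intro n
    have H := hcomm 0 (n+1)
    simp only [jacobiMulR, mulJacobiR, if_pos rfl, if_neg (Nat.succ_ne_zero n),
      Nat.add_sub_cancel, zero_add] at H
    simp only [show 1+(n+1) = n+2 from by omega, show n+1+1 = n+2 from rfl] at H
    simp only [aL]
    push_cast at H ⊢
    linear_combination -H
  have hrel1 : ∀ j : ℕ, (aL α (j+1) - aL α j) * h (2*j+2) + 2 * h (2*j+3)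
      + (aL α (j+2) - aL α (j+1)) * h (2*j+4) = 0 := by
    intro j
    have H := hcomm (j+2) (j+1)
    simp only [jacobiMulR, mulJacobiR, if_neg (Nat.succ_ne_zero (j+1)),
      if_neg (Nat.succ_ne_zero j), Nat.add_sub_cancel] at H
    simp only [show j+2-1 = j+1 from rfl, show j+1-1 = j from rfl,
      show (j+1)+(j+1) = 2*j+2 from by omega, show (j+2)+(j+1) = 2*j+3 from by omega,
      show (j+2+1)+(j+1) = 2*j+4 from by omega, show (j+2)+j = 2*j+2 from by omega,
      show (j+2)+(j+1+1) = 2*j+4 from by omega] at H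
    simp only [aL]
    push_cast at H ⊢
    linear_combination H
  have hrel2 : ∀ j : ℕ, (aL α (j+2) - aL α j) * h (2*j+3) + 4 * h (2*j+4)
      + (aL α (j+3) - aL α (j+1)) * h (2*j+5) = 0 := by
    intro j
    have H := hcomm (j+3) (j+1)
    simp only [jacobiMulR, mulJacobiR, if_neg (Nat.succ_ne_zero (j+2)),
      if_neg (Nat.succ_ne_zero j), Nat.add_sub_cancel] at H
    simp only [show j+3-1 = j+2 from rfl, show j+1-1 = j from rfl,
      show (j+2)+(j+1) = 2*j+3 from by omega, show (j+3)+(j+1) = 2*j+4 from by omega,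
      show (j+3+1)+(j+1) = 2*j+5 from by omega, show (j+3)+j = 2*j+3 from by omega,
      show (j+3)+(j+1+1) = 2*j+5 from by omega] at H
    simp only [aL]
    push_cast at H ⊢
    linear_combination H
  -- Combined two-term relations
  have hK : ∀ j : ℕ, (((j:ℝ)+2)*(aL α (j+2) - aL α j) - aL α (2*j+3)) * h (2*j+3)
      + (((j:ℝ)+2)*(aL α (j+3) - aL α (j+1)) - aL α (2*j+4) + aL α 0) * h (2*j+5) = 0 := by
    intro j
    have h1 := hrel2 j
    have h2 := hrel0 (2*j+3)
    simp only [show 2*j+3+1 = 2*j+4 from rfl, show 2*j+3+2 = 2*j+5 from rfl] at h2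
    push_cast at h2
    linear_combination ((j:ℝ)+2) * h1 - h2
  have hL : ∀ j : ℕ, ((2*(j:ℝ)+3)*(aL α (j+1) - aL α j) - aL α (2*j+2)) * h (2*j+2)
      + ((2*(j:ℝ)+3)*(aL α (j+2) - aL α (j+1)) - aL α (2*j+3) + aL α 0) * h (2*j+4) = 0 := by
    intro j
    have h1 := hrel1 j
    have h2 := hrel0 (2*j+2)
    simp only [show 2*j+2+1 = 2*j+3 from rfl, show 2*j+2+2 = 2*j+4 from rfl] at h2
    push_cast at h2
    linear_combination (2*(j:ℝ)+3) * h1 - h2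
  -- limits
  have hk1 := kappa1_lim hα
  have hk2 := kappa2_lim hα
  have hl1 := lambda1_lim hα
  have hl2 := lambda2_lim hα
  have h0sq := aL_sq hα 0
  have h0p := aL_pos hα 0
  push_cast at h0sq
  have hL2ne : aL α 0 - 1 - α/2 ≠ 0 := by
    intro hc
    exact hα0 (by nlinarith [sq_nonneg α])
  obtain ⟨J, hJ⟩ : ∃ J : ℕ, ∀ j, J ≤ j →
      (((j:ℝ)+2)*(aL α (j+3) - aL α (j+1)) - aL α (2*j+4) + aL α 0) ≠ 0 ∧
      ((2*(j:ℝ)+3)*(aL α (j+2) - aL α (j+1)) - aL α (2*j+3) + aL α 0) ≠ 0 := by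
    have e1 := hk2.eventually_ne hL2ne
    have e2 := hl2.eventually_ne hL2ne
    exact eventually_atTop.mp (e1.and e2)
  by_cases hz : ∃ k, 2*J+2 ≤ k ∧ h k = 0
  · -- zero case : everything vanishes
    obtain ⟨k₀, hk₀le, hk₀⟩ := hz
    have upstep : ∀ k, 2*J+2 ≤ k → h k = 0 → h (k+2) = 0 := by
      intro k hk hk0
      rcases Nat.even_or_odd k with ⟨t, ht⟩ | ⟨t, ht⟩
      · obtain ⟨j, hjt⟩ : ∃ j, t = j+1 := ⟨t-1, by omega⟩
        have hkeq : k = 2*j+2 := by omega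
        have hJj : J ≤ j := by omega
        have hrel := hL j
        rw [hkeq] at hk0
        rw [hkeq]
        rw [hk0, mul_zero, zero_add] at hrel
        have := (hJ j hJj).2
        rcases mul_eq_zero.mp hrel with hc | hc
        · exact absurd hc this
        · exact hc
      · obtain ⟨j, hjt⟩ : ∃ j, t = j+1 := ⟨t-1, by omega⟩
        have hkeq : k = 2*j+3 := by omega
        have hJj : J ≤ j := by omega
        have hrel := hK j
        rw [hkeq] at hk0
        rw [hkeq]
        rw [hk0, mul_zero, zero_add] at hrel
        have := (hJ j hJj).1
        rcases mul_eq_zero.mp hrel with hc | hc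
        · exact absurd hc this
        · exact hc
    have h1z : h (k₀+1) = 0 := by
      have h2z : h (k₀+2) = 0 := upstep k₀ hk₀le hk₀
      have hr := hrel0 k₀
      rw [hk₀, h2z] at hr
      have hcoef : (0:ℝ) < 2*(k₀:ℝ)+2 := by positivity
      have : (2*(k₀:ℝ)+2) * h (k₀+1) = 0 := by linarith
      rcases mul_eq_zero.mp this with hc | hc
      · exact absurd hc (ne_of_gt hcoef)
      · exact hc
    have hup : ∀ t : ℕ, h (k₀ + 2*t) = 0 ∧ h (k₀ + 1 + 2*t) = 0 := by
      intro t
      induction t with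
      | zero => exact ⟨by simpa using hk₀, by simpa using h1z⟩
      | succ t ih =>
        constructor
        · have := upstep (k₀+2*t) (by omega) ih.1
          rw [show k₀+2*(t+1) = k₀+2*t+2 from by ring]
          exact this
        · have := upstep (k₀+1+2*t) (by omega) ih.2
          rw [show k₀+1+2*(t+1) = k₀+1+2*t+2 from by ring]
          exact this
    have hupall : ∀ k, k₀ ≤ k → h k = 0 := by
      intro k hkk
      rcases Nat.even_or_odd (k - k₀) with ⟨t, ht⟩ | ⟨t, ht⟩
      · rw [show k = k₀ + 2*t from by omega]; exact (hup t).1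
      · rw [show k = k₀ + 1 + 2*t from by omega]; exact (hup t).2
    have hdown : ∀ n, h (n+1) = 0 → h (n+2) = 0 → h n = 0 := by
      intro n e1 e2
      have hr := hrel0 n
      rw [e1, e2] at hr
      have : aL α n * h n = 0 := by linarith
      rcases mul_eq_zero.mp this with hc | hc
      · exact absurd hc (ne_of_gt (aL_pos hα n))
      · exact hc
    have hzero : ∀ i, h (k₀ - i) = 0 ∧ h (k₀ - i + 1) = 0 := by
      intro i
      induction i with
      | zero => exact ⟨by simpa using hk₀, by simpa using h1z⟩
      | succ i ih =>
        rcases le_or_gt (i+1) k₀ with hle | hlt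
        · have e1 : k₀ - (i+1) + 1 = k₀ - i := by omega
          have e2 : k₀ - (i+1) + 2 = k₀ - i + 1 := by omega
          constructor
          · apply hdown
            · rw [e1]; exact ih.1
            · rw [e2]; exact ih.2
          · rw [e1]; exact ih.1
        · rw [show k₀ - (i+1) = k₀ - i from by omega]
          exact ih
    obtain ⟨k, hkne⟩ := hne
    rcases le_or_gt k k₀ with hk | hk
    · have := (hzero (k₀ - k)).1
      rw [show k₀ - (k₀ - k) = k from by omega] at this
      exact hkne this
    · exact hkne (hupall k (le_of_lt hk))
  · -- nonzero case : limit argument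
    push_neg at hz
    set L : ℝ := -((-α/2) / (aL α 0 - 1 - α/2)) with hLdef
    have hq : Tendsto (fun j : ℕ => h (2*j+5) / h (2*j+3)) atTop (𝓝 L) := by
      have hdiv := (hk1.div hk2 hL2ne).neg
      apply hdiv.congr'
      filter_upwards [eventually_ge_atTop J] with j hj
      have hK' := hK j
      have hκ2 := (hJ j hj).1
      have hh3 := hz (2*j+3) (by omega)
      simp only [Pi.neg_apply, Pi.add_apply, Pi.mul_apply, Pi.div_apply]
      field_simp
      linear_combination -hK'
    have hp : Tendsto (fun j : ℕ => h (2*j+4) / h (2*j+2)) atTop (𝓝 L) := by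
      have hdiv := (hl1.div hl2 hL2ne).neg
      apply hdiv.congr'
      filter_upwards [eventually_ge_atTop J] with j hj
      have hL' := hL j
      have hlam2 := (hJ j hj).2
      have hh2 := hz (2*j+2) (by omega)
      simp only [Pi.neg_apply, Pi.add_apply, Pi.mul_apply, Pi.div_apply]
      field_simp
      linear_combination -hL'
    have hp1 : Tendsto (fun j : ℕ => h (2*j+6) / h (2*j+4)) atTop (𝓝 L) := by
      have := hp.comp (tendsto_add_atTop_nat 1)
      refine this.congr (fun j => ?_)
      simp only [Function.comp]
      rw [show 2*(j+1)+4 = 2*j+6 from by ring, show 2*(j+1)+2 = 2*j+4 from by ring]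
    have hm : Tendsto (fun j : ℕ => h (2*j+4) / h (2*j+3)) atTop (𝓝 (-(1/2 + 1/2 * L))) := by
      have t1 : Tendsto (fun j : ℕ => aL α (2*j+3)/(4*(j:ℝ)+8)) atTop (𝓝 (1/2)) := by
        have := Tdivlin hα 3 4 8 (by norm_num)
        rw [show (2:ℝ)/4 = 1/2 by norm_num] at this
        exact this
      have t2 : Tendsto (fun j : ℕ => (aL α (2*j+4) - aL α 0)/(4*(j:ℝ)+8)) atTop (𝓝 (1/2)) := by
        have ta := Tdivlin hα 4 4 8 (by norm_num)
        have tb := (tendsto_inv_lin 4 8 (by norm_num)).const_mul (aL α 0)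
        have tc := ta.sub tb
        rw [show (2:ℝ)/4 - aL α 0 * 0 = 1/2 by norm_num] at tc
        refine tc.congr (fun j => ?_)
        have hd : (4*(j:ℝ)+8) ≠ 0 := by positivity
        field_simp
      have hcomb := (t1.add (t2.mul hq)).neg
      apply hcomb.congr'
      filter_upwards [eventually_ge_atTop J] with j hj
      have hr := hrel0 (2*j+3)
      simp only [show 2*j+3+1 = 2*j+4 from rfl, show 2*j+3+2 = 2*j+5 from rfl] at hr
      push_cast at hr
      have hh3 := hz (2*j+3) (by omega)
      have hd : (4*(j:ℝ)+8) ≠ 0 := by positivity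
      field_simp
      linear_combination -hr
    have hnn : Tendsto (fun j : ℕ => h (2*j+5) / h (2*j+4)) atTop (𝓝 (-(1/2 + 1/2 * L))) := by
      have t1 : Tendsto (fun j : ℕ => aL α (2*j+4)/(4*(j:ℝ)+10)) atTop (𝓝 (1/2)) := by
        have := Tdivlin hα 4 4 10 (by norm_num)
        rw [show (2:ℝ)/4 = 1/2 by norm_num] at this
        exact this
      have t2 : Tendsto (fun j : ℕ => (aL α (2*j+5) - aL α 0)/(4*(j:ℝ)+10)) atTop (𝓝 (1/2)) := by
        have ta := Tdivlin hα 5 4 10 (by norm_num)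
        have tb := (tendsto_inv_lin 4 10 (by norm_num)).const_mul (aL α 0)
        have tc := ta.sub tb
        rw [show (2:ℝ)/4 - aL α 0 * 0 = 1/2 by norm_num] at tc
        refine tc.congr (fun j => ?_)
        have hd : (4*(j:ℝ)+10) ≠ 0 := by positivity
        field_simp
      have hcomb := (t1.add (t2.mul hp1)).neg
      apply hcomb.congr'
      filter_upwards [eventually_ge_atTop J] with j hj
      have hr := hrel0 (2*j+4)
      simp only [show 2*j+4+1 = 2*j+5 from rfl, show 2*j+4+2 = 2*j+6 from rfl] at hr
      push_cast at hr
      have hh4 := hz (2*j+4) (by omega)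
      have hd : (4*(j:ℝ)+10) ≠ 0 := by positivity
      field_simp
      linear_combination -hr
    have hq2 : Tendsto (fun j : ℕ => h (2*j+5) / h (2*j+3)) atTop
        (𝓝 ((-(1/2 + 1/2 * L)) * (-(1/2 + 1/2 * L)))) := by
      apply (hnn.mul hm).congr'
      filter_upwards [eventually_ge_atTop J] with j hj
      have hh3 := hz (2*j+3) (by omega)
      have hh4 := hz (2*j+4) (by omega)
      field_simp
    have hLM := tendsto_nhds_unique hq hq2
    have hLm1 : (L - 1)^2 = 0 := by linear_combination (-4 : ℝ) * hLM
    have hL1 : L = 1 := by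
      have := sq_eq_zero_iff.mp hLm1
      linarith
    have h1 : -((-α/2) / (aL α 0 - 1 - α/2)) = 1 := by rw [← hLdef]; exact hL1
    have hx : (-α/2) / (aL α 0 - 1 - α/2) = -1 := by linarith
    have hx2 := (div_eq_iff hL2ne).mp hx
    exact hα0 (by nlinarith [sq_nonneg α])
end
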